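/- Let m, n, t be integers with m > n ≥ 3, t ≥ 1 and 2t < m. Then the t+2 polynomials x^n·(1+x)^{m−n}, T((1+x)^m), T^2((1+x)^m), T^4((1+x)^m), …, T^{2t}((1+x)^m) are linearly independent over ℚ in ℚ[x]. -/

import Mathlib

/-!
`T` multiplies the coefficient of `x^k` by `k`, so the `T`-part of the combination is `q(T)(1+x)^m`
with `q(x) = β₁ x + ∑ β_{2i} x^{2i}`; and `x^n (1+x)^{m-n}` is `x^n Dⁿ (1+x)^m / m^{(n)}`, where
`x^n Dⁿ` multiplies the coefficient of `x^k` by the falling factorial `k^{(n)}`. Comparing the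
(nonzero) coefficients of `x^k`, `k ≤ m`, the polynomial `m^{(n)} q + a x^{(n)}`, of degree at most
`m`, vanishes at `0, 1, …, m`, so it is zero. As `n ≥ 3`, `x^{(n)}` vanishes at `1` and `2`, while
`q(x) - q(-x) = 2 β₁ x`; evaluating at `±1, ±2` and using `(-2)^{(n)} = (n + 1) (-1)^{(n)} ≠ 0`
gives `a = 0`, hence `q = 0`.
-/

open Polynomial

/-- The operator `T p = x · p'` on `ℚ[x]`. -/
noncomputable def T : Polynomial ℚ → Polynomial ℚ := fun p => X * derivative p

theorem descFactorial_mul_coeff_one_add_X_pow {R : Type*} [CommSemiring R] (m n k : ℕ) :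
    (k.descFactorial n : R) * ((1 + X) ^ m).coeff k
      = m.descFactorial n * (X ^ n * (1 + X) ^ (m - n)).coeff k := by
  rw [coeff_X_pow_mul']
  split_ifs with hnk
  · have h := congrArg (coeff · (k - n)) (iterate_derivative_X_add_pow m n (1 : R))
    simp only [coeff_iterate_derivative, coeff_smul, Nat.sub_add_cancel hnk] at h
    simpa only [map_one, add_comm X, nsmul_eq_mul] using h
  · rw [Nat.descFactorial_eq_zero_iff_lt.mpr (by omega), Nat.cast_zero, zero_mul, mul_zero]

theorem coeff_T (p : ℚ[X]) (k : ℕ) : (T p).coeff k = k * p.coeff k := by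
  cases k with
  | zero => simp [T]
  | succ k => simp [T, coeff_derivative, mul_comm]

theorem coeff_T_iterate (j : ℕ) (p : ℚ[X]) (k : ℕ) :
    (T^[j] p).coeff k = (k : ℚ) ^ j * p.coeff k := by
  induction j generalizing p with
  | zero => simp
  | succ j ih => rw [Function.iterate_succ_apply, ih, coeff_T, pow_succ, mul_assoc]

noncomputable def combinationPoly (b : ℚ) (β : ℕ → ℚ) (t : ℕ) : ℚ[X] :=
  C b * X + ∑ i ∈ Finset.Icc 1 t, C (β (2 * i)) * X ^ (2 * i)

theorem coeff_combination_T_iterate (b : ℚ) (β : ℕ → ℚ) (t : ℕ) (f : ℚ[X]) (k : ℕ) :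
    (C b * T^[1] f + ∑ i ∈ Finset.Icc 1 t, C (β (2 * i)) * T^[2 * i] f).coeff k
      = (combinationPoly b β t).eval (k : ℚ) * f.coeff k := by
  simp only [combinationPoly, coeff_add, coeff_C_mul, finsetSum_coeff, coeff_T_iterate, eval_add,
    eval_mul, eval_C, eval_X, eval_finsetSum, eval_pow, pow_one, add_mul, Finset.sum_mul]
  exact congrArg₂ _ (by ring) (Finset.sum_congr rfl fun i _ => by ring)

theorem eval_neg_combinationPoly (b : ℚ) (β : ℕ → ℚ) (t : ℕ) (x : ℚ) :
    (combinationPoly b β t).eval (-x) = (combinationPoly b β t).eval x - 2 * b * x := by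
  simp only [combinationPoly, eval_add, eval_mul, eval_C, eval_X, eval_finsetSum, eval_pow,
    (even_two_mul _).neg_pow]
  ring

theorem natDegree_combinationPoly_le (b : ℚ) (β : ℕ → ℚ) (t : ℕ) :
    (combinationPoly b β t).natDegree ≤ 2 * t + 1 := by
  refine natDegree_add_le_of_degree_le ((natDegree_C_mul_le _ _).trans ?_)
    (natDegree_sum_le_of_forall_le _ _ fun i hi => (natDegree_C_mul_le _ _).trans ?_)
  · rw [natDegree_X]; omega
  · rw [natDegree_X_pow]; have := (Finset.mem_Icc.mp hi).2; omega

theorem coeff_one_combinationPoly (b : ℚ) (β : ℕ → ℚ) (t : ℕ) :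
    (combinationPoly b β t).coeff 1 = b := by
  simp only [combinationPoly, coeff_add, coeff_mul_X, coeff_C_zero, finsetSum_coeff, coeff_C_mul,
    coeff_X_pow, mul_ite, mul_one, mul_zero, add_eq_left]
  exact Finset.sum_eq_zero fun x _ => if_neg (by omega)

theorem coeff_two_mul_combinationPoly (b : ℚ) (β : ℕ → ℚ) {t i : ℕ} (hi : i ∈ Finset.Icc 1 t) :
    (combinationPoly b β t).coeff (2 * i) = β (2 * i) := by
  simp only [combinationPoly, coeff_add, coeff_C_mul, coeff_X, mul_ite, mul_one, mul_zero,
    finsetSum_coeff, coeff_X_pow, mul_eq_mul_left_iff, OfNat.ofNat_ne_zero, or_false,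
    Finset.sum_ite_eq, Finset.mem_Icc]
  rw [if_neg (by omega), if_pos (Finset.mem_Icc.mp hi), zero_add]

theorem descPochhammer_eval_neg_one_ne_zero {K : Type*} [Field K] [CharZero K] (n : ℕ) :
    (descPochhammer K n).eval (-1) ≠ 0 := by
  rw [descPochhammer_eval_eq_prod_range]
  refine Finset.prod_ne_zero_iff.mpr fun j _ => ?_
  rw [← neg_add', neg_ne_zero, add_comm]
  exact Nat.cast_add_one_ne_zero j

theorem descPochhammer_eval_neg_two {R : Type*} [CommRing R] (n : ℕ) :
    (descPochhammer R n).eval (-2) = (n + 1) * (descPochhammer R n).eval (-1) := by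
  have h := (descPochhammer_succ_eval n (-1 : R)).symm.trans
    (congrArg (eval (-1)) (descPochhammer_succ_left R n))
  rw [eval_mul, eval_X, eval_comp, eval_sub, eval_X, eval_one,
    show (-1 - 1 : R) = -2 by norm_num] at h
  linear_combination h

theorem eq_zero_of_C_mul_add_C_mul_descPochhammer_eq_zero {K : Type*} [Field K] [CharZero K]
    {q : K[X]} {b d a : K} {n : ℕ}
    (hq : ∀ x, q.eval (-x) = q.eval x - 2 * b * x) (hd : d ≠ 0) (hn : 3 ≤ n)
    (h : C d * q + C a * descPochhammer K n = 0) : a = 0 ∧ q = 0 := by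
  have hev (x : K) : d * q.eval x + a * (descPochhammer K n).eval x = 0 := by
    simpa using congrArg (eval x) h
  have hD1 : (descPochhammer K n).eval 1 = 0 := by
    simpa using descPochhammer_eval_coe_nat_of_lt (R := K) (k := 1) (by omega)
  have hD2 : (descPochhammer K n).eval 2 = 0 := by
    simpa using descPochhammer_eval_coe_nat_of_lt (R := K) (k := 2) (by omega)
  have hm1 := hev (-1)
  have hm2 := hev (-2)
  rw [hq] at hm1 hm2
  rw [descPochhammer_eval_neg_two] at hm2
  have ha : a * (descPochhammer K n).eval (-1) * (n - 1) = 0 := by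
    linear_combination hm2 - 2 * hm1 - hev 2 + 2 * hev 1 + a * hD2 - 2 * a * hD1
  have hn1 : (n : K) - 1 ≠ 0 := by
    rw [sub_ne_zero]; exact_mod_cast (by omega : n ≠ 1)
  obtain rfl : a = 0 := by simpa [hn1, descPochhammer_eval_neg_one_ne_zero] using ha
  simpa [hd] using h

theorem eval_C_mul_combinationPoly_add_C_mul_descPochhammer {m n t : ℕ} {a b : ℚ} {β : ℕ → ℚ}
    (h : C a * (X ^ n * (1 + X) ^ (m - n)) + C b * T^[1] ((1 + X) ^ m)
        + ∑ i ∈ Finset.Icc 1 t, C (β (2 * i)) * T^[2 * i] ((1 + X) ^ m) = 0)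
    {k : ℕ} (hk : k ≤ m) :
    (C (m.descFactorial n : ℚ) * combinationPoly b β t + C a * descPochhammer ℚ n).eval (k : ℚ)
      = 0 := by
  have hcoeff := congrArg (coeff · k) h
  rw [add_assoc, coeff_add, coeff_C_mul, coeff_combination_T_iterate, coeff_zero] at hcoeff
  have hchoose : ((1 + X : ℚ[X]) ^ m).coeff k ≠ 0 := by
    rw [coeff_one_add_X_pow]; exact_mod_cast (Nat.choose_pos hk).ne'
  refine (mul_eq_zero.mp ?_).resolve_right hchoose
  simp only [eval_add, eval_mul, eval_C, descPochhammer_eval_eq_descFactorial]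
  linear_combination (m.descFactorial n : ℚ) * hcoeff
    + a * descFactorial_mul_coeff_one_add_X_pow (R := ℚ) m n k

theorem stmt5_general (m n t : ℕ) (hmn : n < m) (hn : 3 ≤ n) (htm : 2 * t < m)
    (a β₁ : ℚ) (β : ℕ → ℚ)
    (h : C a * (X ^ n * (1 + X) ^ (m - n)) + C β₁ * T^[1] ((1 + X) ^ m)
        + ∑ i ∈ Finset.Icc 1 t, C (β (2 * i)) * T^[2 * i] ((1 + X) ^ m) = 0) :
    a = 0 ∧ β₁ = 0 ∧ ∀ i : ℕ, 1 ≤ i → i ≤ t → β (2 * i) = 0 := by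
  set P := C (m.descFactorial n : ℚ) * combinationPoly β₁ β t + C a * descPochhammer ℚ n
  have hdeg : P.natDegree < Fintype.card (Fin (m + 1)) := by
    rw [Fintype.card_fin, Nat.lt_succ_iff]
    refine natDegree_add_le_of_degree_le ((natDegree_C_mul_le _ _).trans ?_)
      ((natDegree_C_mul_le _ _).trans ?_)
    · exact (natDegree_combinationPoly_le β₁ β t).trans (by omega)
    · rw [descPochhammer_natDegree]; exact hmn.le
  have hP : P = 0 := eq_zero_of_natDegree_lt_card_of_eval_eq_zero P
    (Nat.cast_injective.comp Fin.val_injective)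
    (fun k => eval_C_mul_combinationPoly_add_C_mul_descPochhammer h (Fin.is_le k)) hdeg
  have hdm : (m.descFactorial n : ℚ) ≠ 0 := by
    exact_mod_cast (Nat.descFactorial_pos.mpr hmn.le).ne'
  obtain ⟨rfl, hq⟩ := eq_zero_of_C_mul_add_C_mul_descPochhammer_eq_zero
    (eval_neg_combinationPoly β₁ β t) hdm hn hP
  refine ⟨rfl, by rw [← coeff_one_combinationPoly β₁ β t, hq, coeff_zero], fun i hi hit => ?_⟩
  rw [← coeff_two_mul_combinationPoly β₁ β (Finset.mem_Icc.mpr ⟨hi, hit⟩), hq, coeff_zero]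

/-- Let `m > n ≥ 3`, `t ≥ 1` and `2t < m`.  Then the `t+2` polynomials
`x^n·(1+x)^{m−n}, T((1+x)^m), T^2((1+x)^m), T^4((1+x)^m), …, T^{2t}((1+x)^m)` are linearly
independent over `ℚ`: any vanishing `ℚ`-linear combination has all coefficients zero. -/
theorem stmt5 (m n t : ℕ) (hmn : n < m) (hn : 3 ≤ n) (ht : 1 ≤ t) (htm : 2 * t < m)
    (a β₁ : ℚ) (β : ℕ → ℚ)
    (h : C a * (X ^ n * (1 + X) ^ (m - n)) + C β₁ * T^[1] ((1 + X) ^ m)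
        + ∑ i ∈ Finset.Icc 1 t, C (β (2 * i)) * T^[2 * i] ((1 + X) ^ m) = 0) :
    a = 0 ∧ β₁ = 0 ∧ ∀ i : ℕ, 1 ≤ i → i ≤ t → β (2 * i) = 0 :=
  stmt5_general m n t hmn hn htm a β₁ β h
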